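/- arXiv:1202.6514 — 5 statements merged into one kernel-verified Lean document; each statement's English description precedes it below -/
import Mathlib

section
/- Define σ_k^{(t)}(r) = t·sinh(√k·t·r)/(t·r)·(r/sinh(√k·r)) for k > 0, i.e. σ_k^{(t)}(r) = sinh(√k·t·r)/sinh(√k·r) (with k = -K/N > 0 corresponding to K < 0). Then for t1, t2, t3 ∈ [0,1] with t1 < t2 and r ≥ 0 with r > 0: σ^{((1-t3)t1 + t3·t2)}(r) = σ^{(1-t3)}((t2-t1)·r) · σ^{(t1)}(r) + σ^{(t3)}((t2-t1)·r) · σ^{(t2)}(r). -/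
/-!
Like every solution of `f'' = f`, `sinh` is determined on `[x, x + d]` by its values at the
endpoints: `sinh (x + s d)` is the combination of `sinh x` and `sinh (x + d)` with weights
`sinh ((1 - s) d) / sinh d` and `sinh (s d) / sinh d`, which is an addition-formula identity.
With `x = c t₁ r` and `d = c (t₂ - t₁) r` these weights are `σ^{(1-t₃)}((t₂ - t₁) r)` and
`σ^{(t₃)}((t₂ - t₁) r)`, and dividing by `sinh (c r)` gives the composition rule.
-/

open Real

theorem Real.sinh_add_mul_sinh_add (x p q : ℝ) :
    sinh (x + q) * sinh (p + q) = sinh p * sinh x + sinh q * sinh (x + p + q) := by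
  simp only [sinh_add, cosh_add]
  linear_combination sinh x * sinh p * cosh_sq q

theorem Real.sinh_add_mul_eq_interpolate (x d s : ℝ) (hd : sinh d ≠ 0) :
    sinh (x + s * d) =
      sinh ((1 - s) * d) / sinh d * sinh x + sinh (s * d) / sinh d * sinh (x + d) := by
  have key := sinh_add_mul_sinh_add x ((1 - s) * d) (s * d)
  rw [show (1 - s) * d + s * d = d by ring, show x + (1 - s) * d + s * d = x + d by ring] at key
  rw [div_mul_eq_mul_div, div_mul_eq_mul_div, ← add_div, eq_div_iff hd]
  linear_combination key

theorem sigma_composition_identity_general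
    (c r t1 t2 t3 : ℝ) (hc : 0 < c) (hr : 0 < r)
    (h12 : t1 < t2)
    (σ : ℝ → ℝ → ℝ)
    (hσ : ∀ t s, σ t s = Real.sinh (c * t * s) / Real.sinh (c * s)) :
    σ ((1 - t3) * t1 + t3 * t2) r =
      σ (1 - t3) ((t2 - t1) * r) * σ t1 r + σ t3 ((t2 - t1) * r) * σ t2 r := by
  have hd : sinh (c * ((t2 - t1) * r)) ≠ 0 :=
    (sinh_pos_iff.mpr (by have := sub_pos.mpr h12; positivity)).ne'
  simp only [hσ]
  rw [show c * ((1 - t3) * t1 + t3 * t2) * r = c * t1 * r + t3 * (c * ((t2 - t1) * r)) by ring,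
    show c * (1 - t3) * ((t2 - t1) * r) = (1 - t3) * (c * ((t2 - t1) * r)) by ring,
    show c * t3 * ((t2 - t1) * r) = t3 * (c * ((t2 - t1) * r)) by ring,
    show c * t2 * r = c * t1 * r + c * ((t2 - t1) * r) by ring,
    sinh_add_mul_eq_interpolate _ _ _ hd]
  ring

theorem sigma_composition_identity
    (c r t1 t2 t3 : ℝ) (hc : 0 < c) (hr : 0 < r)
    (h1 : t1 ∈ Set.Icc (0:ℝ) 1) (h2 : t2 ∈ Set.Icc (0:ℝ) 1)
    (h3 : t3 ∈ Set.Icc (0:ℝ) 1) (h12 : t1 < t2)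
    (σ : ℝ → ℝ → ℝ)
    (hσ : ∀ t s, σ t s = Real.sinh (c * t * s) / Real.sinh (c * s)) :
    σ ((1 - t3) * t1 + t3 * t2) r =
      σ (1 - t3) ((t2 - t1) * r) * σ t1 r + σ t3 ((t2 - t1) * r) * σ t2 r :=
  sigma_composition_identity_general c r t1 t2 t3 hc hr h12 σ hσ
end

section
/- Define σ^{(t)}(r) = sinh(c·t·r)/sinh(c·r) for a constant c > 0 and r > 0. Then the second composition identity holds: σ^{(1-(1-t3)t1 - t3·t2)}(r) = σ^{(1-t3)}((t2-t1)·r) · σ^{(1-t1)}(r) + σ^{(t3)}((t2-t1)·r) · σ^{(1-t2)}(r), for all t1, t2, t3 ∈ [0,1] with t1 < t2. -/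
/-!
With `a = c (t2 - t1) r` and `u = c (1 - t1) r`, the numerators of the identity are
`sinh (u - t3 a)`, `sinh ((1 - t3) a)`, `sinh u`, `sinh (t3 a)` and `sinh (u - a)`, so after
clearing the denominator `sinh a` (nonzero because `t1 < t2`) it is the addition-formula identity
`sinh (u - s a) sinh a = sinh ((1 - s) a) sinh u + sinh (s a) sinh (u - a)`.
-/

open Real

/-- Expanding each `sinh` of a difference, the `cosh u` and `cosh a` terms cancel. -/
theorem sinh_sub_mul_mul_sinh (a u s : ℝ) :
    sinh (u - s * a) * sinh a =
      sinh ((1 - s) * a) * sinh u + sinh (s * a) * sinh (u - a) := by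
  rw [show (1 - s) * a = a - s * a by ring, sinh_sub, sinh_sub, sinh_sub]
  ring

theorem sinh_sub_mul_div_eq (a u w s : ℝ) (ha : a ≠ 0) :
    sinh (u - s * a) / w =
      sinh ((1 - s) * a) / sinh a * (sinh u / w) +
        sinh (s * a) / sinh a * (sinh (u - a) / w) := by
  have hsinh : sinh a ≠ 0 := sinh_ne_zero.2 ha
  calc sinh (u - s * a) / w = sinh (u - s * a) * sinh a / sinh a / w := by
        rw [mul_div_cancel_right₀ _ hsinh]
    _ = _ := by rw [sinh_sub_mul_mul_sinh]; ring

theorem sigma_composition_identity_reversed_general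
    (c r t1 t2 t3 : ℝ) (hc : 0 < c) (hr : 0 < r)
    (h12 : t1 < t2)
    (σ : ℝ → ℝ → ℝ)
    (hσ : ∀ t s, σ t s = Real.sinh (c * t * s) / Real.sinh (c * s)) :
    σ (1 - ((1 - t3) * t1 + t3 * t2)) r =
      σ (1 - t3) ((t2 - t1) * r) * σ (1 - t1) r +
        σ t3 ((t2 - t1) * r) * σ (1 - t2) r := by
  have ha : c * ((t2 - t1) * r) ≠ 0 := by
    have : 0 < t2 - t1 := by linarith
    positivity
  simp only [hσ]
  rw [show c * (1 - ((1 - t3) * t1 + t3 * t2)) * r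
        = c * (1 - t1) * r - t3 * (c * ((t2 - t1) * r)) by ring,
      show c * (1 - t3) * ((t2 - t1) * r) = (1 - t3) * (c * ((t2 - t1) * r)) by ring,
      show c * t3 * ((t2 - t1) * r) = t3 * (c * ((t2 - t1) * r)) by ring,
      show c * (1 - t2) * r = c * (1 - t1) * r - c * ((t2 - t1) * r) by ring]
  exact sinh_sub_mul_div_eq _ _ _ _ ha

theorem sigma_composition_identity_reversed
    (c r t1 t2 t3 : ℝ) (hc : 0 < c) (hr : 0 < r)
    (h1 : t1 ∈ Set.Icc (0:ℝ) 1) (h2 : t2 ∈ Set.Icc (0:ℝ) 1)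
    (h3 : t3 ∈ Set.Icc (0:ℝ) 1) (h12 : t1 < t2)
    (σ : ℝ → ℝ → ℝ)
    (hσ : ∀ t s, σ t s = Real.sinh (c * t * s) / Real.sinh (c * s)) :
    σ (1 - ((1 - t3) * t1 + t3 * t2)) r =
      σ (1 - t3) ((t2 - t1) * r) * σ (1 - t1) r +
        σ t3 ((t2 - t1) * r) * σ (1 - t2) r :=
  sigma_composition_identity_reversed_general c r t1 t2 t3 hc hr h12 σ hσ
end

section
/- Let (X,d) be a metric space, let γ, γ̂ : [0,1] → X be constant-speed geodesics, and let t ∈ (0,1). Suppose γ_t = γ̂_t and that the pair of endpoints is cyclically monotone for the squared distance cost, i.e. d(γ_0,γ̂_1)² + d(γ̂_0,γ_1)² ≥ d(γ_0,γ_1)² + d(γ̂_0,γ̂_1)². Then d(γ_0,γ_1) = d(γ̂_0,γ̂_1), i.e. the two geodesics have equal length. -/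
theorem intersecting_geodesics_equal_length
    {X : Type*} [MetricSpace X] (γ γ' : ℝ → X) (t : ℝ)
    (ht : t ∈ Set.Ioo (0:ℝ) 1)
    (hγ : ∀ s u, s ∈ Set.Icc (0:ℝ) 1 → u ∈ Set.Icc (0:ℝ) 1 →
      dist (γ s) (γ u) = |s - u| * dist (γ 0) (γ 1))
    (hγ' : ∀ s u, s ∈ Set.Icc (0:ℝ) 1 → u ∈ Set.Icc (0:ℝ) 1 →
      dist (γ' s) (γ' u) = |s - u| * dist (γ' 0) (γ' 1))
    (hmeet : γ t = γ' t)
    (hcm : dist (γ 0) (γ 1) ^ 2 + dist (γ' 0) (γ' 1) ^ 2 ≤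
      dist (γ 0) (γ' 1) ^ 2 + dist (γ' 0) (γ 1) ^ 2) :
    dist (γ 0) (γ 1) = dist (γ' 0) (γ' 1) := by
  obtain ⟨ht0, ht1⟩ := ht
  set L := dist (γ 0) (γ 1) with hL
  set M := dist (γ' 0) (γ' 1) with hM
  have htI : t ∈ Set.Icc (0:ℝ) 1 := ⟨le_of_lt ht0, le_of_lt ht1⟩
  have h0 : (0:ℝ) ∈ Set.Icc (0:ℝ) 1 := ⟨le_rfl, zero_le_one⟩
  have h1 : (1:ℝ) ∈ Set.Icc (0:ℝ) 1 := ⟨zero_le_one, le_rfl⟩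
  have d1 : dist (γ 0) (γ t) = t * L := by
    rw [hγ 0 t h0 htI]; rw [abs_of_nonpos (by linarith)]; ring_nf
  have d2 : dist (γ' t) (γ' 1) = (1 - t) * M := by
    rw [hγ' t 1 htI h1]; rw [abs_of_nonpos (by linarith)]; ring_nf
  have d3 : dist (γ' 0) (γ' t) = t * M := by
    rw [hγ' 0 t h0 htI]; rw [abs_of_nonpos (by linarith)]; ring_nf
  have d4 : dist (γ t) (γ 1) = (1 - t) * L := by
    rw [hγ t 1 htI h1]; rw [abs_of_nonpos (by linarith)]; ring_nf
  have tri1 : dist (γ 0) (γ' 1) ≤ t * L + (1 - t) * M := by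
    calc dist (γ 0) (γ' 1) ≤ dist (γ 0) (γ t) + dist (γ t) (γ' 1) := dist_triangle _ _ _
    _ = t * L + (1 - t) * M := by rw [d1, hmeet, d2]
  have tri2 : dist (γ' 0) (γ 1) ≤ t * M + (1 - t) * L := by
    calc dist (γ' 0) (γ 1) ≤ dist (γ' 0) (γ' t) + dist (γ' t) (γ 1) := dist_triangle _ _ _
    _ = t * M + (1 - t) * L := by rw [d3, ← hmeet, d4]
  have hLnn : 0 ≤ L := dist_nonneg
  have hMnn : 0 ≤ M := dist_nonneg
  have hA : 0 ≤ dist (γ 0) (γ' 1) := dist_nonneg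
  have hB : 0 ≤ dist (γ' 0) (γ 1) := dist_nonneg
  have s1 : dist (γ 0) (γ' 1) ^ 2 ≤ (t * L + (1 - t) * M) ^ 2 := pow_le_pow_left₀ hA tri1 2
  have s2 : dist (γ' 0) (γ 1) ^ 2 ≤ (t * M + (1 - t) * L) ^ 2 := pow_le_pow_left₀ hB tri2 2
  have key : L ^ 2 + M ^ 2 ≤ (t * L + (1 - t) * M) ^ 2 + (t * M + (1 - t) * L) ^ 2 := by linarith
  have hpos : 0 < t * (1 - t) := mul_pos ht0 (by linarith)
  have hfac : t * (1 - t) * (L - M) ^ 2 ≤ 0 := by nlinarith [key]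
  have hsq : (L - M) ^ 2 ≤ 0 := by
    by_contra h
    push_neg at h
    nlinarith [mul_pos hpos h]
  have : (L - M) ^ 2 = 0 := le_antisymm hsq (sq_nonneg _)
  have := pow_eq_zero_iff (n := 2) (by norm_num) |>.mp this
  linarith
end

section
/- Let real numbers w, t0 ∈ [0,1] and suppose a finite measure π on a space of curves satisfies ∫ (w(γ)·l(γ))² dπ = t0² · ∫ l(γ)² dπ and ∫ ((1-w(γ))·l(γ))² dπ = (1-t0)² · ∫ l(γ)² dπ, where w : Γ → [0,1] and l : Γ → [0,∞) are measurable. Then ∫ (w(γ) - t0)² · l(γ)² dπ = 0; in particular w(γ) = t0 for π-a.e. γ with l(γ) > 0. -/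
open MeasureTheory

theorem reparametrization_trivial
    {Γ : Type*} [MeasurableSpace Γ] (π : Measure Γ) [IsFiniteMeasure π]
    (t0 : ℝ) (ht0 : t0 ∈ Set.Icc (0:ℝ) 1)
    (w l : Γ → ℝ) (hw_meas : Measurable w) (hl_meas : Measurable l)
    (hw : ∀ γ, w γ ∈ Set.Icc (0:ℝ) 1) (hl : ∀ γ, 0 ≤ l γ)
    (hl2_int : Integrable (fun γ => l γ ^ 2) π)
    (h1 : ∫ γ, (w γ * l γ) ^ 2 ∂π = t0 ^ 2 * ∫ γ, l γ ^ 2 ∂π)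
    (h2 : ∫ γ, ((1 - w γ) * l γ) ^ 2 ∂π = (1 - t0) ^ 2 * ∫ γ, l γ ^ 2 ∂π) :
    (∫ γ, (w γ - t0) ^ 2 * l γ ^ 2 ∂π = 0) ∧
      (∀ᵐ γ ∂π, 0 < l γ → w γ = t0) := by
  obtain ⟨ht0l, ht0r⟩ := ht0
  have hint1 : Integrable (fun γ => (w γ * l γ) ^ 2) π := by
    refine hl2_int.mono' ((hw_meas.mul hl_meas).pow_const 2).aestronglyMeasurable
      (Filter.Eventually.of_forall fun γ => ?_)
    have h := hw γ
    rw [Real.norm_eq_abs, abs_of_nonneg (by positivity), mul_pow]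
    have hsq : w γ ^ 2 ≤ 1 := by nlinarith [h.1, h.2]
    nlinarith [sq_nonneg (l γ)]
  have hint2 : Integrable (fun γ => ((1 - w γ) * l γ) ^ 2) π := by
    refine hl2_int.mono' (((measurable_const.sub hw_meas).mul hl_meas).pow_const 2).aestronglyMeasurable
      (Filter.Eventually.of_forall fun γ => ?_)
    have h := hw γ
    rw [Real.norm_eq_abs, abs_of_nonneg (by positivity), mul_pow]
    have hsq : (1 - w γ) ^ 2 ≤ 1 := by nlinarith [h.1, h.2]
    nlinarith [sq_nonneg (l γ)]
  have hkey : ∫ γ, (w γ - t0) ^ 2 * l γ ^ 2 ∂π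
      = (1 - t0) * ∫ γ, (w γ * l γ) ^ 2 ∂π + t0 * ∫ γ, ((1 - w γ) * l γ) ^ 2 ∂π
        - t0 * (1 - t0) * ∫ γ, l γ ^ 2 ∂π := by
    have e1 : ∀ γ, (w γ - t0) ^ 2 * l γ ^ 2
        = (1 - t0) * (w γ * l γ) ^ 2 + t0 * ((1 - w γ) * l γ) ^ 2
          - t0 * (1 - t0) * l γ ^ 2 := fun γ => by ring
    simp_rw [e1]
    have hA : Integrable (fun γ => (1 - t0) * (w γ * l γ) ^ 2 + t0 * ((1 - w γ) * l γ) ^ 2) π :=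
      (hint1.const_mul _).add (hint2.const_mul _)
    have hB : Integrable (fun γ => t0 * (1 - t0) * l γ ^ 2) π := hl2_int.const_mul _
    rw [integral_sub hA hB, integral_add (hint1.const_mul _) (hint2.const_mul _),
      integral_const_mul, integral_const_mul, integral_const_mul]
  have hzero : ∫ γ, (w γ - t0) ^ 2 * l γ ^ 2 ∂π = 0 := by
    rw [hkey, h1, h2]; ring
  refine ⟨hzero, ?_⟩
  have hint3 : Integrable (fun γ => (w γ - t0) ^ 2 * l γ ^ 2) π := by
    refine hl2_int.mono' (((hw_meas.sub measurable_const).pow_const 2).mul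
      (hl_meas.pow_const 2)).aestronglyMeasurable (Filter.Eventually.of_forall fun γ => ?_)
    have h := hw γ
    rw [Real.norm_eq_abs, abs_of_nonneg (by positivity)]
    have hsq : (w γ - t0) ^ 2 ≤ 1 := by nlinarith [h.1, h.2]
    nlinarith [sq_nonneg (l γ)]
  have hae : (fun γ => (w γ - t0) ^ 2 * l γ ^ 2) =ᵐ[π] 0 := by
    rw [← integral_eq_zero_iff_of_nonneg (fun γ => by positivity) hint3]
    exact hzero
  filter_upwards [hae] with γ hγ hlγ
  have h0 : (w γ - t0) ^ 2 * l γ ^ 2 = 0 := hγ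
  have hl2 : l γ ^ 2 ≠ 0 := by positivity
  rcases mul_eq_zero.1 h0 with h | h
  · nlinarith [sq_nonneg (w γ - t0)]
  · exact absurd h hl2
end

section
/- Suppose f : [0,1] → ℝ satisfies: f is lower semicontinuous, and for dyadic rationals the midpoint convexity bound f(k·2^{-n-1}) ≤ σ^{(1/2)}(2^{-n}D)·(f((k-1)·2^{-n-1}) + f((k+1)·2^{-n-1})) holds for all odd 0 < k < 2^{n+1} and all n, where σ^{(t)}(r) = sinh(c·t·r)/sinh(c·r) with c > 0, D > 0. If additionally f(k·2^{-n}) ≤ σ^{(1-k·2^{-n})}(D)·f(0) + σ^{(k·2^{-n})}(D)·f(1) holds for some n and all 0 ≤ k ≤ 2^n, with f(0), f(1) ≤ 0, then f(t) ≤ σ^{(1-t)}(D)·f(0) + σ^{(t)}(D)·f(1) for all t ∈ [0,1]. -/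
open Real Filter

private lemma sinh_key (u A : ℝ) (hu : 0 < u) :
    Real.sinh u / Real.sinh (2*u) * (Real.sinh (A - u) + Real.sinh (A + u)) = Real.sinh A := by
  have h1 : Real.sinh u ≠ 0 := (Real.sinh_pos_iff.mpr hu).ne'
  have h2 : Real.cosh u ≠ 0 := (Real.cosh_pos u).ne'
  rw [Real.sinh_add, Real.sinh_sub, Real.sinh_two_mul]
  field_simp
  ring

theorem dyadic_convexity_propagation
    (c D : ℝ) (hc : 0 < c) (hD : 0 < D)
    (σ : ℝ → ℝ → ℝ)
    (hσ : ∀ t r, σ t r = Real.sinh (c * t * r) / Real.sinh (c * r))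
    (f : ℝ → ℝ)
    (hf_lsc : LowerSemicontinuousOn f (Set.Icc 0 1))
    (hmid : ∀ n : ℕ, ∀ k : ℕ, Odd k → 0 < k → k < 2 ^ (n + 1) →
      f ((k : ℝ) / 2 ^ (n + 1)) ≤
        σ (1/2) (D / 2 ^ n) *
          (f (((k : ℝ) - 1) / 2 ^ (n + 1)) + f (((k : ℝ) + 1) / 2 ^ (n + 1))))
    (hbase : ∃ n : ℕ, ∀ k : ℕ, k ≤ 2 ^ n →
      f ((k : ℝ) / 2 ^ n) ≤
        σ (1 - (k : ℝ) / 2 ^ n) D * f 0 + σ ((k : ℝ) / 2 ^ n) D * f 1)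
    (hf0 : f 0 ≤ 0) (hf1 : f 1 ≤ 0) :
    ∀ t ∈ Set.Icc (0:ℝ) 1, f t ≤ σ (1 - t) D * f 0 + σ t D * f 1 := by
  obtain ⟨n, hbn⟩ := hbase
  set g : ℝ → ℝ := fun t =>
    Real.sinh (c*(1-t)*D)/Real.sinh (c*D) * f 0 + Real.sinh (c*t*D)/Real.sinh (c*D) * f 1
    with hg
  have hgσ : ∀ t, σ (1-t) D * f 0 + σ t D * f 1 = g t := by
    intro t; rw [hσ, hσ]
  have hgc : Continuous g := by
    apply Continuous.add <;> apply Continuous.mul <;> fun_prop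
  -- dyadic bound at all levels m ≥ n
  have hdy : ∀ m, n ≤ m → ∀ k : ℕ, k ≤ 2^m → f ((k:ℝ)/2^m) ≤ g ((k:ℝ)/2^m) := by
    intro m hm
    induction m, hm using Nat.le_induction with
    | base =>
      intro k hk
      rw [← hgσ]; exact hbn k hk
    | succ m hm ih =>
      intro k hk
      have h2p : (2:ℕ)^(m+1) = 2 * 2^m := by rw [pow_succ]; ring
      rcases Nat.even_or_odd k with ⟨j, hj⟩ | hodd
      · have hj' : j ≤ 2^m := by omega
        have heq : (k:ℝ)/2^(m+1) = (j:ℝ)/2^m := by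
          subst hj; push_cast; rw [pow_succ]; ring
        rw [heq]; exact ih j hj'
      · obtain ⟨a, ha⟩ := hodd
        have hklt : k < 2^(m+1) := by omega
        have hmid' := hmid m k ⟨a, ha⟩ (by omega) hklt
        rw [hσ] at hmid'
        have ha1 : a ≤ 2^m := by omega
        have ha2 : a + 1 ≤ 2^m := by omega
        set s : ℝ := (k:ℝ)/2^(m+1) with hs
        set e : ℝ := (1:ℝ)/2^(m+1) with he
        have hle : ((k:ℝ) - 1)/2^(m+1) = s - e := by rw [hs, he]; ring
        have hre : ((k:ℝ) + 1)/2^(m+1) = s + e := by rw [hs, he]; ring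
        have hla : s - e = ((a:ℕ):ℝ)/2^m := by
          rw [hs, he]; subst ha; push_cast; rw [pow_succ]; ring
        have hra : s + e = (((a+1:ℕ)):ℝ)/2^m := by
          rw [hs, he]; subst ha; push_cast; rw [pow_succ]; ring
        rw [hle, hre] at hmid'
        have hfl : f (s - e) ≤ g (s - e) := by rw [hla]; exact ih a ha1
        have hfr : f (s + e) ≤ g (s + e) := by rw [hra]; exact ih (a+1) ha2
        have hSpos : 0 ≤ Real.sinh (c * (1/2) * (D / 2^m)) / Real.sinh (c * (D/2^m)) := by
          apply div_nonneg <;> apply le_of_lt <;> apply Real.sinh_pos_iff.mpr <;> positivity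
        have hstep : f s ≤ Real.sinh (c * (1/2) * (D / 2^m)) / Real.sinh (c * (D/2^m)) *
            (g (s - e) + g (s + e)) :=
          hmid'.trans (mul_le_mul_of_nonneg_left (add_le_add hfl hfr) hSpos)
        -- key identity
        set u : ℝ := c * D / 2^(m+1) with hu
        have hupos : 0 < u := by rw [hu]; positivity
        have K1 := sinh_key u (c*s*D) hupos
        have K2 := sinh_key u (c*(1-s)*D) hupos
        have e1 : c * (1/2) * (D / 2^m) = u := by rw [hu, pow_succ]; ring
        have e2 : c * (D / 2^m) = 2 * u := by rw [hu, pow_succ]; ring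
        have e3 : c * (1 - (s - e)) * D = c*(1-s)*D + u := by rw [hu, he]; ring
        have e4 : c * (s - e) * D = c*s*D - u := by rw [hu, he]; ring
        have e5 : c * (1 - (s + e)) * D = c*(1-s)*D - u := by rw [hu, he]; ring
        have e6 : c * (s + e) * D = c*s*D + u := by rw [hu, he]; ring
        have hid : Real.sinh (c * (1/2) * (D / 2^m)) / Real.sinh (c * (D/2^m)) *
            (g (s - e) + g (s + e)) = g s := by
          simp only [hg]
          rw [e1, e2, e3, e4, e5, e6]
          linear_combination (f 0 / Real.sinh (c*D)) * K2 + (f 1 / Real.sinh (c*D)) * K1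
        rw [hid] at hstep
        exact hstep
  -- lower semicontinuity step
  intro t ht
  rw [hgσ]
  by_contra hcon
  push_neg at hcon
  obtain ⟨y, hy1, hy2⟩ := exists_between hcon
  have hlsc : ∀ᶠ x in nhdsWithin t (Set.Icc 0 1), y < f x := hf_lsc t ht y hy2
  have hgy : ∀ᶠ x in nhdsWithin t (Set.Icc 0 1), g x < y :=
    ((hgc.tendsto t).eventually (gt_mem_nhds hy1)).filter_mono nhdsWithin_le_nhds
  have ht0 : (0:ℝ) ≤ t := ht.1
  have ht1 : t ≤ 1 := ht.2
  set q : ℕ → ℝ := fun m => ((⌊t * 2^m⌋₊ : ℕ) : ℝ) / 2^m with hq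
  have hqle : ∀ m, q m ≤ t := by
    intro m
    have h1 : ((⌊t * 2^m⌋₊ : ℕ) : ℝ) ≤ t * 2^m := Nat.floor_le (by positivity)
    rw [hq]
    rw [div_le_iff₀ (by positivity)]
    simpa using h1
  have hqlb : ∀ m, t - 1/2^m ≤ q m := by
    intro m
    have h1 : t * 2^m < (⌊t * 2^m⌋₊ : ℝ) + 1 := Nat.lt_floor_add_one _
    rw [hq]
    rw [le_div_iff₀ (show (0:ℝ) < 2^m by positivity)]
    have h2 : (t - 1/2^m) * 2^m = t * 2^m - 1 := by
      field_simp
    linarith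
  have hkey : ∀ m : ℕ, ⌊t * 2^m⌋₊ ≤ 2^m := by
    intro m
    have h1 : t * 2^m ≤ 2^m := by nlinarith [show (0:ℝ) < 2^m by positivity]
    have h2 : ((⌊t * 2^m⌋₊ : ℕ) : ℝ) ≤ ((2^m : ℕ) : ℝ) := by
      push_cast
      exact (Nat.floor_le (by positivity)).trans h1
    exact_mod_cast h2
  have hqmem : ∀ m, q m ∈ Set.Icc (0:ℝ) 1 := by
    intro m
    constructor
    · rw [hq]; positivity
    · rw [hq, div_le_one (by positivity)]
      calc ((⌊t * 2^m⌋₊ : ℕ) : ℝ) ≤ ((2^m : ℕ) : ℝ) := by exact_mod_cast hkey m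
        _ = 2^m := by push_cast; ring
  have hqt : Tendsto q atTop (nhds t) := by
    apply tendsto_of_tendsto_of_tendsto_of_le_of_le (f := q)
      (g := fun m : ℕ => t - 1/2^m) (h := fun _ => t)
    · have h0 : Tendsto (fun m : ℕ => ((1:ℝ)/2)^m) atTop (nhds 0) :=
        tendsto_pow_atTop_nhds_zero_of_lt_one (by norm_num) (by norm_num)
      have h0' : Tendsto (fun m : ℕ => (1:ℝ)/2^m) atTop (nhds 0) := by
        refine h0.congr fun m => ?_
        rw [div_pow, one_pow]
      simpa using tendsto_const_nhds.sub h0'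
    · exact tendsto_const_nhds
    · exact hqlb
    · exact hqle
  have hqtw : Tendsto q atTop (nhdsWithin t (Set.Icc 0 1)) :=
    tendsto_nhdsWithin_of_tendsto_nhds_of_eventually_within _ hqt
      (Eventually.of_forall hqmem)
  have hev : ∀ᶠ m in atTop, y < f (q m) ∧ g (q m) < y ∧ n ≤ m :=
    ((hqtw.eventually hlsc).and ((hqtw.eventually hgy).and (eventually_ge_atTop n))).mono
      (fun m ⟨h1, h2, h3⟩ => ⟨h1, h2, h3⟩)
  obtain ⟨m, h1, h2, h3⟩ := hev.exists
  have hb := hdy m h3 ⌊t * 2^m⌋₊ (hkey m)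
  have hqm : q m = ((⌊t * 2^m⌋₊ : ℕ) : ℝ) / 2^m := rfl
  rw [hqm] at h1 h2
  linarith
end
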